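/- arXiv:1804.04390 — 5 statements merged into one kernel-verified Lean document; each statement's English description precedes it below -/
import Mathlib

section
/- Divergence-free fields in the reduced Adini 1-form space are curls: Let curl f := (−∂_y f, ∂_x f) for f ∈ ℝ[x,y], let A := {f ∈ ℝ[x,y] : deg f ≤ 3} + span{x³y, xy³}, and let Ã := {(p,q) ∈ ℝ[x,y]² : deg p ≤ 1 and deg q ≤ 1} + span{curl(x³), curl(y³), curl(x²y), curl(xy²), curl(x³y), curl(xy³)}. Then {u ∈ Ã : ∂_x u₁ + ∂_y u₂ = 0} = {curl φ : φ ∈ A}. -/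
open MvPolynomial

noncomputable section

/-- Polynomials in two variables `x, y` over `ℝ`. -/
abbrev M2 : Type := MvPolynomial (Fin 2) ℝ

def x : M2 := X 0
def y : M2 := X 1

/-- The 2D curl of a scalar polynomial: `curl f = (−∂_y f, ∂_x f)`. -/
def curl2 (f : M2) : Fin 2 → M2 := ![-(pderiv 1 f), pderiv 0 f]

/-- The divergence of a polynomial vector field. -/
def div2 (u : Fin 2 → M2) : M2 := pderiv 0 (u 0) + pderiv 1 (u 1)

/-- The 2D Adini 0-form shape space `A := P₃ + span{x³y, xy³}`. -/
def A0 : Submodule ℝ M2 :=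
  restrictTotalDegree (Fin 2) ℝ 3 ⊔ Submodule.span ℝ {x ^ 3 * y, x * y ^ 3}

/-- The reduced Adini 1-form shape space
`Ã := [P₁]² + span{curl(x³), curl(y³), curl(x²y), curl(xy²), curl(x³y), curl(xy³)}`. -/
def Atilde : Submodule ℝ (Fin 2 → M2) :=
  (Submodule.pi Set.univ fun _ => restrictTotalDegree (Fin 2) ℝ 1) ⊔
    Submodule.span ℝ
      {curl2 (x ^ 3), curl2 (y ^ 3), curl2 (x ^ 2 * y), curl2 (x * y ^ 2),
        curl2 (x ^ 3 * y), curl2 (x * y ^ 3)}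

/-! `Ã` is `[P₁]²` plus the curls of `span {x³, y³, x²y, xy², x³y, xy³}`, and curls are
divergence-free, so a divergence-free `u ∈ Ã` differs from such a curl by a divergence-free
affine field. The affine field `(a + bx + cy, d + ex + fy)` is divergence-free iff `f = -b`, and
then it is the curl of the quadratic `x (d + (e/2) x) - y (a + bx + (c/2) y)`. Conversely
`A = P₂ + span {x³, y³, x²y, xy², x³y, xy³}`, and the curl maps `P₂` into `[P₁]²`. -/

namespace MvPolynomial

variable {R σ : Type*} [CommSemiring R]

theorem pderiv_pderiv_comm (i j : σ) (f : MvPolynomial σ R) :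
    pderiv i (pderiv j f) = pderiv j (pderiv i f) := by
  classical
  induction f using MvPolynomial.induction_on with
  | C a => simp
  | add p q hp hq => simp [hp, hq]
  | mul_X p k hp =>
    simp only [pderiv_mul, map_add, pderiv_X, hp, Pi.single_apply, apply_ite (pderiv _)]
    split_ifs <;> simp only [pderiv_one, map_zero] <;> subst_vars <;> ring

theorem pderiv_mem_restrictTotalDegree {n : ℕ} {i : σ} {p : MvPolynomial σ R}
    (hp : p ∈ restrictTotalDegree σ R (n + 1)) : pderiv i p ∈ restrictTotalDegree σ R n := by
  suffices restrictTotalDegree σ R (n + 1) ≤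
      (restrictTotalDegree σ R n).comap (pderiv i).toLinearMap from this hp
  rw [restrictTotalDegree, restrictSupport_eq_span, Submodule.span_le, Set.image_subset_iff]
  intro m (hm : m.degree ≤ n + 1)
  change pderiv i (monomial m 1) ∈ restrictSupport R _
  rw [pderiv_monomial, monomial_mem_restrictSupport, one_mul]
  rcases eq_or_ne (m i) 0 with hi | hi
  · exact Or.inr (by simp [hi])
  have hsplit : m - Finsupp.single i 1 + Finsupp.single i 1 = m :=
    tsub_add_cancel_of_le (Finsupp.single_le_iff.2 (Nat.one_le_iff_ne_zero.2 hi))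
  have hdeg := congrArg Finsupp.degree hsplit
  rw [map_add, Finsupp.degree_single] at hdeg
  exact Or.inl (show Finsupp.degree _ ≤ n by omega)

theorem mul_mem_restrictTotalDegree {a b : ℕ} {p q : MvPolynomial σ R}
    (hp : p ∈ restrictTotalDegree σ R a) (hq : q ∈ restrictTotalDegree σ R b) :
    p * q ∈ restrictTotalDegree σ R (a + b) := by
  rw [mem_restrictTotalDegree] at *
  exact (totalDegree_mul p q).trans (add_le_add hp hq)

end MvPolynomial

open Submodule

theorem monomial_one_eq_x_pow_mul_y_pow (m : Fin 2 →₀ ℕ) :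
    (monomial m 1 : M2) = x ^ m 0 * y ^ m 1 := by
  rw [monomial_eq, C_1, one_mul, Finsupp.prod_fintype _ _ fun _ => pow_zero _, Fin.prod_univ_two]
  rfl

theorem restrictTotalDegree_eq_span_x_pow_mul_y_pow (n : ℕ) :
    restrictTotalDegree (Fin 2) ℝ n =
      span ℝ ((fun ab : ℕ × ℕ => x ^ ab.1 * y ^ ab.2) '' {ab | ab.1 + ab.2 ≤ n}) := by
  rw [restrictTotalDegree, restrictSupport_eq_span]
  congr 1
  ext p
  constructor
  · rintro ⟨m, hm : m.degree ≤ n, rfl⟩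
    refine ⟨(m 0, m 1), ?_, (monomial_one_eq_x_pow_mul_y_pow m).symm⟩
    rwa [Finsupp.degree_eq_sum, Fin.sum_univ_two] at hm
  · rintro ⟨⟨a, b⟩, hab, rfl⟩
    refine ⟨Finsupp.single 0 a + Finsupp.single 1 b, ?_,
      by simp [monomial_one_eq_x_pow_mul_y_pow]⟩
    change Finsupp.degree _ ≤ n
    simpa using hab

theorem x_pow_mul_y_pow_mem_restrictTotalDegree {a b n : ℕ} (h : a + b ≤ n) :
    x ^ a * y ^ b ∈ restrictTotalDegree (Fin 2) ℝ n := by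
  rw [restrictTotalDegree_eq_span_x_pow_mul_y_pow]
  exact subset_span ⟨(a, b), h, rfl⟩

theorem restrictTotalDegree_one_eq_span :
    restrictTotalDegree (Fin 2) ℝ 1 = span ℝ {1, x, y} := by
  refine le_antisymm ?_ (span_le.2 ?_)
  · rw [restrictTotalDegree_eq_span_x_pow_mul_y_pow, span_le]
    rintro _ ⟨⟨a, b⟩, hab : a + b ≤ 1, rfl⟩
    obtain ⟨rfl, rfl⟩ | ⟨rfl, rfl⟩ | ⟨rfl, rfl⟩ :
        (a = 0 ∧ b = 0) ∨ (a = 1 ∧ b = 0) ∨ (a = 0 ∧ b = 1) := by omega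
    all_goals exact subset_span (by simp)
  · rintro _ (rfl | rfl | rfl)
    · simpa using x_pow_mul_y_pow_mem_restrictTotalDegree (a := 0) (b := 0) (n := 1) (by norm_num)
    · simpa using x_pow_mul_y_pow_mem_restrictTotalDegree (a := 1) (b := 0) (n := 1) le_rfl
    · simpa using x_pow_mul_y_pow_mem_restrictTotalDegree (a := 0) (b := 1) (n := 1) le_rfl

theorem restrictTotalDegree_three_le :
    restrictTotalDegree (Fin 2) ℝ 3 ≤
      restrictTotalDegree (Fin 2) ℝ 2 ⊔ span ℝ {x ^ 3, y ^ 3, x ^ 2 * y, x * y ^ 2} := by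
  rw [restrictTotalDegree_eq_span_x_pow_mul_y_pow, span_le]
  rintro _ ⟨⟨a, b⟩, hab : a + b ≤ 3, rfl⟩
  by_cases h2 : a + b ≤ 2
  · exact mem_sup_left (x_pow_mul_y_pow_mem_restrictTotalDegree h2)
  refine mem_sup_right (subset_span ?_)
  obtain ⟨rfl, rfl⟩ | ⟨rfl, rfl⟩ | ⟨rfl, rfl⟩ | ⟨rfl, rfl⟩ :
      (a = 3 ∧ b = 0) ∨ (a = 0 ∧ b = 3) ∨ (a = 2 ∧ b = 1) ∨ (a = 1 ∧ b = 2) := by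
    omega
  all_goals simp

def curl2ₗ : M2 →ₗ[ℝ] (Fin 2 → M2) :=
  LinearMap.pi ![-(pderiv 1).toLinearMap, (pderiv 0).toLinearMap]

@[simp] theorem curl2ₗ_apply (f : M2) : curl2ₗ f = curl2 f := by
  ext i : 1
  fin_cases i <;> rfl

theorem curl2_add (f g : M2) : curl2 (f + g) = curl2 f + curl2 g := by
  simp only [← curl2ₗ_apply, map_add]

theorem div2_add (u v : Fin 2 → M2) : div2 (u + v) = div2 u + div2 v := by
  simp only [div2, Pi.add_apply, map_add]
  abel

theorem div2_curl2 (f : M2) : div2 (curl2 f) = 0 := by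
  simp [div2, curl2, pderiv_pderiv_comm 0 1 f]

theorem curl2_mem_pi_restrictTotalDegree {n : ℕ} {f : M2}
    (hf : f ∈ restrictTotalDegree (Fin 2) ℝ (n + 1)) :
    curl2 f ∈ pi Set.univ fun _ => restrictTotalDegree (Fin 2) ℝ n := by
  intro i _
  fin_cases i
  · exact neg_mem (pderiv_mem_restrictTotalDegree hf)
  · exact pderiv_mem_restrictTotalDegree hf

theorem div2_affine (a b c d e f : ℝ) :
    div2 ![a • 1 + b • x + c • y, d • 1 + e • x + f • y] = (b + f) • 1 := by
  simp only [div2, x, y, Matrix.cons_val_zero, Matrix.cons_val_one, map_add, Derivation.map_smul]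
  simp only [pderiv_one, pderiv_X_self, pderiv_X_of_ne (show (0 : Fin 2) ≠ 1 by decide),
    pderiv_X_of_ne (show (1 : Fin 2) ≠ 0 by decide)]
  module

theorem curl2_quadratic (a b c d e : ℝ) :
    curl2 (x * (d • 1 + (e / 2) • x) - y * (a • 1 + b • x + (c / 2) • y)) =
      ![a • 1 + b • x + c • y, d • 1 + e • x + (-b) • y] := by
  ext i : 1
  fin_cases i
  all_goals
    simp only [curl2, x, y, Fin.zero_eta, Fin.mk_one, Matrix.cons_val_zero, Matrix.cons_val_one]
    simp only [map_sub, map_add, pderiv_mul, Derivation.map_smul]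
    simp only [pderiv_one, pderiv_X_self, pderiv_X_of_ne (show (0 : Fin 2) ≠ 1 by decide),
      pderiv_X_of_ne (show (1 : Fin 2) ≠ 0 by decide)]
    simp only [smul_zero, mul_zero, zero_mul, zero_add, add_zero, mul_add, mul_smul_comm, mul_one,
      one_mul]
    module

theorem exists_curl2_eq_of_div2_eq_zero {w : Fin 2 → M2}
    (hw : w ∈ pi Set.univ fun _ => restrictTotalDegree (Fin 2) ℝ 1) (hdiv : div2 w = 0) :
    ∃ φ ∈ restrictTotalDegree (Fin 2) ℝ 2, curl2 φ = w := by
  have hP₁ : ∀ p ∈ span ℝ {1, x, y}, p ∈ restrictTotalDegree (Fin 2) ℝ 1 := by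
    rw [restrictTotalDegree_one_eq_span]
    exact fun _ => id
  simp only [mem_pi, Set.mem_univ, true_implies, restrictTotalDegree_one_eq_span,
    mem_span_triple] at hw
  obtain ⟨a, b, c, hw₀⟩ := hw 0
  obtain ⟨d, e, f, hw₁⟩ := hw 1
  have hw_eq : w = ![a • 1 + b • x + c • y, d • 1 + e • x + f • y] := by
    ext i : 1
    fin_cases i
    exacts [hw₀.symm, hw₁.symm]
  have hf : f = -b := by
    rw [hw_eq, div2_affine] at hdiv
    exact eq_neg_of_add_eq_zero_right ((smul_eq_zero.1 hdiv).resolve_right one_ne_zero)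
  refine ⟨x * (d • 1 + (e / 2) • x) - y * (a • 1 + b • x + (c / 2) • y), ?_, ?_⟩
  · exact sub_mem (mul_mem_restrictTotalDegree (hP₁ _ (subset_span (by simp)))
        (hP₁ _ (mem_span_triple.2 ⟨d, e / 2, 0, by simp⟩)))
      (mul_mem_restrictTotalDegree (hP₁ _ (subset_span (by simp)))
        (hP₁ _ (mem_span_triple.2 ⟨a, b, c / 2, rfl⟩)))
  · rw [curl2_quadratic, hw_eq, hf]

theorem A0_eq_restrictTotalDegree_two_sup_span :
    A0 = restrictTotalDegree (Fin 2) ℝ 2 ⊔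
      span ℝ {x ^ 3, y ^ 3, x ^ 2 * y, x * y ^ 2, x ^ 3 * y, x * y ^ 3} := by
  refine le_antisymm (sup_le ?_ ?_) (sup_le ?_ ?_)
  · exact restrictTotalDegree_three_le.trans
      (sup_le_sup_left (span_mono (by simp [Set.insert_subset_iff])) _)
  · exact le_sup_of_le_right (span_mono (by simp [Set.insert_subset_iff]))
  · exact le_sup_of_le_left
      (restrictSupport_mono ℝ (Set.ofPred_subset_ofPred.2 fun _ h => h.trans (by norm_num)))
  · have hP₃ {a b : ℕ} (h : a + b = 3) : x ^ a * y ^ b ∈ A0 :=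
      mem_sup_left (x_pow_mul_y_pow_mem_restrictTotalDegree h.le)
    rw [span_le]
    rintro _ (rfl | rfl | rfl | rfl | rfl | rfl)
    · simpa using hP₃ (a := 3) (b := 0) rfl
    · simpa using hP₃ (a := 0) (b := 3) rfl
    · simpa using hP₃ (a := 2) (b := 1) rfl
    · simpa using hP₃ (a := 1) (b := 2) rfl
    all_goals exact mem_sup_right (subset_span (by simp))

theorem Atilde_eq_pi_sup_map_curl2ₗ :
    Atilde = (pi Set.univ fun _ => restrictTotalDegree (Fin 2) ℝ 1) ⊔
      (span ℝ {x ^ 3, y ^ 3, x ^ 2 * y, x * y ^ 2, x ^ 3 * y, x * y ^ 3}).map curl2ₗ := by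
  simp [Atilde, map_span, Set.image_insert_eq]

/-- Divergence-free fields in the reduced Adini 1-form space are exactly the
curls of potentials in the Adini 0-form space. -/
theorem divfree_reduced_adini_eq_curls :
    {u : Fin 2 → M2 | u ∈ Atilde ∧ div2 u = 0} =
      {u : Fin 2 → M2 | ∃ φ ∈ A0, u = curl2 φ} := by
  ext u
  simp only [Set.mem_ofPred_eq, Atilde_eq_pi_sup_map_curl2ₗ,
    A0_eq_restrictTotalDegree_two_sup_span, mem_sup, mem_map, curl2ₗ_apply]
  constructor
  · rintro ⟨⟨w, hw, _, ⟨ψ, hψ, rfl⟩, rfl⟩, hdiv⟩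
    rw [div2_add, div2_curl2, add_zero] at hdiv
    obtain ⟨φ, hφ, rfl⟩ := exists_curl2_eq_of_div2_eq_zero hw hdiv
    exact ⟨φ + ψ, ⟨φ, hφ, ψ, hψ, rfl⟩, (curl2_add φ ψ).symm⟩
  · rintro ⟨_, ⟨p, hp, s, hs, rfl⟩, rfl⟩
    exact ⟨⟨curl2 p, curl2_mem_pi_restrictTotalDegree hp, curl2 s, ⟨s, hs, rfl⟩,
      (curl2_add p s).symm⟩, div2_curl2 _⟩

end
end

section
/- Unisolvence of the reduced Adini 1-form element: Let curl f := (−∂_y f, ∂_x f) and Ã := {(p,q) ∈ ℝ[x,y]² : deg p ≤ 1 and deg q ≤ 1} + span{curl(x³), curl(y³), curl(x²y), curl(xy²), curl(x³y), curl(xy³)}. Suppose u = (u₁,u₂) ∈ Ã satisfies: u(ε,δ) = (0,0) for all ε,δ ∈ {−1,1} (vanishing at the four vertices of the square [−1,1]²), ∫_{−1}^{1} u₁(ε,t) dt = 0 for ε ∈ {−1,1}, and ∫_{−1}^{1} u₂(t,δ) dt = 0 for δ ∈ {−1,1} (vanishing normal-component integrals over the four edges). Then u = 0. -/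
open MvPolynomial

lemma int_quad (A B C : ℝ) : (∫ t in (-1:ℝ)..1, (A + B*t + C*t^2)) = 2*A + 2/3*C := by
  have h1 : (∫ t in (-1:ℝ)..1, (A + B*t + C*t^2))
      = (∫ t in (-1:ℝ)..1, A) + (∫ t in (-1:ℝ)..1, B*t) + (∫ t in (-1:ℝ)..1, C*t^2) := by
    rw [intervalIntegral.integral_add, intervalIntegral.integral_add]
    · exact (continuous_const.intervalIntegrable _ _)
    · exact ((continuous_const.mul continuous_id).intervalIntegrable _ _)
    · exact ((continuous_const.add (continuous_const.mul continuous_id)).intervalIntegrable _ _)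
    · exact ((continuous_const.mul (continuous_pow 2)).intervalIntegrable _ _)
  rw [h1, intervalIntegral.integral_const, intervalIntegral.integral_const_mul,
    intervalIntegral.integral_const_mul, integral_id, integral_pow]
  norm_num; ring

lemma fin2_cases (m : Fin 2 →₀ ℕ) (hm : m 0 + m 1 ≤ 1) :
    m = 0 ∨ m = Finsupp.single 0 1 ∨ m = Finsupp.single 1 1 := by
  classical
  rcases Nat.le_one_iff_eq_zero_or_eq_one.mp (le_trans (Nat.le_add_right _ _) hm) with h0 | h0
  · rcases Nat.le_one_iff_eq_zero_or_eq_one.mp (le_trans (Nat.le_add_left _ _) hm) with h1 | h1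
    · left; ext i; fin_cases i <;> simp [h0, h1]
    · right; right; ext i; fin_cases i <;> simp [h0, h1, Finsupp.single_apply]
  · have h1 : m 1 = 0 := by omega
    right; left; ext i; fin_cases i <;> simp [h0, h1, Finsupp.single_apply]

lemma deg1 (p : MvPolynomial (Fin 2) ℝ) (hp : p.totalDegree ≤ 1) :
    p = C (coeff 0 p) + C (coeff (Finsupp.single 0 1) p) * X 0
      + C (coeff (Finsupp.single 1 1) p) * X 1 := by
  classical
  have h01 : (Finsupp.single (0:Fin 2) 1) ≠ 0 := by simp
  have h11 : (Finsupp.single (1:Fin 2) 1) ≠ 0 := by simp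
  have hne : (Finsupp.single (0:Fin 2) 1) ≠ Finsupp.single 1 1 := by
    intro h; have := DFunLike.congr_fun h 0; simp [Finsupp.single_apply] at this
  ext m
  simp only [coeff_add, coeff_C, coeff_C_mul, coeff_X']
  by_cases h : m = 0 ∨ m = Finsupp.single 0 1 ∨ m = Finsupp.single 1 1
  · rcases h with h | h | h <;> subst h <;>
      simp [h01, h11, hne, h01.symm, h11.symm, hne.symm, eq_comm]
  · push_neg at h
    obtain ⟨h1, h2, h3⟩ := h
    have hc : coeff m p = 0 := by
      by_contra hc
      have hs : m ∈ p.support := by simpa [mem_support_iff] using hc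
      have := MvPolynomial.le_totalDegree hs
      have hsum : (m.sum fun _ e => e) = m 0 + m 1 := by
        rw [Finsupp.sum_fintype] <;> simp [Fin.sum_univ_two]
      rcases fin2_cases m (by omega) with h | h | h <;> tauto
    simp [hc, h1, h2, h3, Ne.symm h1, Ne.symm h2, Ne.symm h3]

noncomputable section

set_option maxHeartbeats 2000000 in
/-- Unisolvence of the reduced Adini 1-form element: a field in `Ã` that
vanishes at the four vertices of `[−1,1]²` and has vanishing normal-component
integrals over the four edges is zero. -/
theorem reduced_adini_unisolvent (u : Fin 2 → M2) (hu : u ∈ Atilde)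
    (hvert : ∀ ε ∈ ({-1, 1} : Set ℝ), ∀ δ ∈ ({-1, 1} : Set ℝ), ∀ i : Fin 2,
      eval ![ε, δ] (u i) = 0)
    (hedgex : ∀ ε ∈ ({-1, 1} : Set ℝ),
      (∫ t in (-1 : ℝ)..1, eval ![ε, t] (u 0)) = 0)
    (hedgey : ∀ δ ∈ ({-1, 1} : Set ℝ),
      (∫ t in (-1 : ℝ)..1, eval ![t, δ] (u 1)) = 0) :
    u = 0 := by
  obtain ⟨v, hv, w, hw, huvw⟩ := Submodule.mem_sup.mp hu
  simp only [Submodule.mem_span_insert, Submodule.mem_span_singleton] at hw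
  obtain ⟨c1, _, ⟨c2, _, ⟨c3, _, ⟨c4, _, ⟨c5, _, ⟨c6, rfl⟩, rfl⟩, rfl⟩, rfl⟩, rfl⟩, rfl⟩ := hw
  have hv0 := (mem_restrictTotalDegree _ _ _).mp (hv 0 (Set.mem_univ 0))
  have hv1 := (mem_restrictTotalDegree _ _ _).mp (hv 1 (Set.mem_univ 1))
  obtain ⟨a, b, c, hvc0⟩ : ∃ a b c : ℝ, v 0 = C a + C b * X 0 + C c * X 1 :=
    ⟨_, _, _, deg1 _ hv0⟩
  obtain ⟨d, e, f, hvc1⟩ : ∃ d e f : ℝ, v 1 = C d + C e * X 0 + C f * X 1 :=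
    ⟨_, _, _, deg1 _ hv1⟩
  have heval0 : ∀ X Y : ℝ, eval ![X, Y] (u 0)
      = a + b*X + c*Y - 3*c2*Y^2 - c3*X^2 - 2*c4*X*Y - c5*X^3 - 3*c6*X*Y^2 := by
    intro X Y
    rw [← huvw]
    simp [hvc0, curl2, x, y, pderiv_mul, pderiv_pow, pderiv_X]
    ring
  have heval1 : ∀ X Y : ℝ, eval ![X, Y] (u 1)
      = d + e*X + f*Y + 3*c1*X^2 + 2*c3*X*Y + c4*Y^2 + 3*c5*X^2*Y + c6*Y^3 := by
    intro X Y
    rw [← huvw]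
    simp [hvc1, curl2, x, y, pderiv_mul, pderiv_pow, pderiv_X]
    ring
  have hm1 : (-1 : ℝ) ∈ ({-1, 1} : Set ℝ) := by norm_num
  have hp1 : (1 : ℝ) ∈ ({-1, 1} : Set ℝ) := by norm_num
  have V1 := (heval0 (-1) (-1)).symm.trans (hvert (-1) hm1 (-1) hm1 0)
  have V2 := (heval0 (-1) 1).symm.trans (hvert (-1) hm1 1 hp1 0)
  have V3 := (heval0 1 (-1)).symm.trans (hvert 1 hp1 (-1) hm1 0)
  have V4 := (heval0 1 1).symm.trans (hvert 1 hp1 1 hp1 0)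
  have W1 := (heval1 (-1) (-1)).symm.trans (hvert (-1) hm1 (-1) hm1 1)
  have W2 := (heval1 (-1) 1).symm.trans (hvert (-1) hm1 1 hp1 1)
  have W3 := (heval1 1 (-1)).symm.trans (hvert 1 hp1 (-1) hm1 1)
  have W4 := (heval1 1 1).symm.trans (hvert 1 hp1 1 hp1 1)
  have hint0 : ∀ X : ℝ, (∫ t in (-1:ℝ)..1, eval ![X, t] (u 0))
      = 2*(a + b*X - c3*X^2 - c5*X^3) + 2/3*(-3*c2 - 3*c6*X) := by
    intro X
    rw [show (∫ t in (-1:ℝ)..1, eval ![X, t] (u 0))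
        = ∫ t in (-1:ℝ)..1, ((a + b*X - c3*X^2 - c5*X^3) + (c - 2*c4*X)*t
            + (-3*c2 - 3*c6*X)*t^2) from by
      congr 1; funext t; rw [heval0]; ring]
    exact int_quad _ _ _
  have hint1 : ∀ Y : ℝ, (∫ t in (-1:ℝ)..1, eval ![t, Y] (u 1))
      = 2*(d + f*Y + c4*Y^2 + c6*Y^3) + 2/3*(3*c1 + 3*c5*Y) := by
    intro Y
    rw [show (∫ t in (-1:ℝ)..1, eval ![t, Y] (u 1))
        = ∫ t in (-1:ℝ)..1, ((d + f*Y + c4*Y^2 + c6*Y^3) + (e + 2*c3*Y)*t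
            + (3*c1 + 3*c5*Y)*t^2) from by
      congr 1; funext t; rw [heval1]; ring]
    exact int_quad _ _ _
  have E1 := (hint0 (-1)).symm.trans (hedgex (-1) hm1)
  have E2 := (hint0 1).symm.trans (hedgex 1 hp1)
  have E3 := (hint1 (-1)).symm.trans (hedgey (-1) hm1)
  have E4 := (hint1 1).symm.trans (hedgey 1 hp1)
  have ha : a = 0 := by linarith
  have hb : b = 0 := by linarith
  have hc : c = 0 := by linarith
  have hd : d = 0 := by linarith
  have he : e = 0 := by linarith
  have hf : f = 0 := by linarith
  have h1 : c1 = 0 := by linarith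
  have h2 : c2 = 0 := by linarith
  have h3 : c3 = 0 := by linarith
  have h4 : c4 = 0 := by linarith
  have h5 : c5 = 0 := by linarith
  have h6 : c6 = 0 := by linarith
  funext i
  apply MvPolynomial.funext
  intro pt
  have hpt : pt = ![pt 0, pt 1] := by funext j; fin_cases j <;> rfl
  fin_cases i <;> rw [hpt] <;>
    simp [heval0, heval1, ha, hb, hc, hd, he, hf, h1, h2, h3, h4, h5, h6]
end
end

section
/- Unisolvence of the lowest-order 2D Adini (plate) element: Let S := {f ∈ ℝ[x,y] : deg f ≤ 3} + span{x³y, xy³}. If p ∈ S satisfies p(ε,δ) = 0, (∂_x p)(ε,δ) = 0 and (∂_y p)(ε,δ) = 0 for all ε,δ ∈ {−1,1}, then p = 0. -/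
open MvPolynomial

noncomputable section

/-- The lowest-order 2D Adini (plate) shape space `S := P₃ + span{x³y, xy³}`. -/
def S2 : Submodule ℝ M2 :=
  restrictTotalDegree (Fin 2) ℝ 3 ⊔ Submodule.span ℝ {x ^ 3 * y, x * y ^ 3}

/-- The exponent finsupp of the monomial `x^i y^j`. -/
def e (i j : ℕ) : Fin 2 →₀ ℕ := Finsupp.single 0 i + Finsupp.single 1 j

lemma e_apply0 (i j : ℕ) : e i j 0 = i := by simp [e, Finsupp.single_apply]
lemma e_apply1 (i j : ℕ) : e i j 1 = j := by simp [e, Finsupp.single_apply]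

lemma fin2_eq (d : Fin 2 →₀ ℕ) : d = e (d 0) (d 1) := by
  ext i; fin_cases i <;> simp [e, Finsupp.single_apply]

lemma mono_eq (i j : ℕ) (c : ℝ) : (monomial (e i j)) c = C c * x ^ i * y ^ j := by
  rw [C_apply, x, y, X_pow_eq_monomial, X_pow_eq_monomial, monomial_mul, monomial_mul]
  simp [e]

/-- The exponent pairs of the 12 basis monomials of the Adini space. -/
def G : Finset (ℕ × ℕ) :=
  {(0,0),(1,0),(0,1),(2,0),(1,1),(0,2),(3,0),(2,1),(1,2),(0,3),(3,1),(1,3)}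

lemma support_sub (q : M2) (hq : q.totalDegree ≤ 3) (a b : ℝ) (p : M2)
    (hpr : q + (a • (x ^ 3 * y) + b • (x * y ^ 3)) = p) :
    p.support ⊆ G.image (fun ij => e ij.1 ij.2) := by
  intro d hd
  have hc : coeff d p ≠ 0 := mem_support_iff.1 hd
  have h31 : (x ^ 3 * y : M2) = monomial (e 3 1) 1 := by rw [mono_eq]; simp
  have h13 : (x * y ^ 3 : M2) = monomial (e 1 3) 1 := by rw [mono_eq]; simp
  by_cases h1 : d = e 3 1
  · exact Finset.mem_image.2 ⟨(3,1), by decide, by rw [h1]⟩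
  by_cases h2 : d = e 1 3
  · exact Finset.mem_image.2 ⟨(1,3), by decide, by rw [h2]⟩
  · have hcq : coeff d q ≠ 0 := by
      rw [← hpr, coeff_add, coeff_add, h31, h13, coeff_smul, coeff_smul,
        coeff_monomial, coeff_monomial, if_neg (fun h => h1 h.symm),
        if_neg (fun h => h2 h.symm)] at hc
      simpa using hc
    have hds : d 0 + d 1 ≤ 3 := by
      have h := le_totalDegree (p := q) (mem_support_iff.2 hcq)
      rw [Finsupp.sum_fintype _ _ (fun _ => rfl), Fin.sum_univ_two] at h
      omega
    have hde := fin2_eq d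
    set i := d 0 with hi0
    set j := d 1 with hj0
    clear_value i j
    have hi : i ≤ 3 := by omega
    have hj : j ≤ 3 := by omega
    subst hde
    interval_cases i <;> interval_cases j <;>
      first
      | omega
      | exact Finset.mem_image.2 ⟨(_, _), by decide, rfl⟩

lemma rep (p : M2) (hsub : p.support ⊆ G.image (fun ij => e ij.1 ij.2)) :
    p = C (coeff (e 0 0) p) + C (coeff (e 1 0) p) * x + C (coeff (e 0 1) p) * y
      + C (coeff (e 2 0) p) * x ^ 2 + C (coeff (e 1 1) p) * x * y + C (coeff (e 0 2) p) * y ^ 2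
      + C (coeff (e 3 0) p) * x ^ 3 + C (coeff (e 2 1) p) * x ^ 2 * y
      + C (coeff (e 1 2) p) * x * y ^ 2 + C (coeff (e 0 3) p) * y ^ 3
      + C (coeff (e 3 1) p) * x ^ 3 * y + C (coeff (e 1 3) p) * x * y ^ 3 := by
  have hinj : ∀ a ∈ G, ∀ b ∈ G, e a.1 a.2 = e b.1 b.2 → a = b := by
    intro a _ b _ h
    have h0 : e a.1 a.2 0 = e b.1 b.2 0 := by rw [h]
    have h1 : e a.1 a.2 1 = e b.1 b.2 1 := by rw [h]
    rw [e_apply0, e_apply0] at h0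
    rw [e_apply1, e_apply1] at h1
    exact Prod.ext h0 h1
  have h1 : p = ∑ d ∈ G.image (fun ij => e ij.1 ij.2), monomial d (coeff d p) := by
    conv_lhs => rw [as_sum p]
    exact Finset.sum_subset hsub (fun d _ hd => by rw [notMem_support_iff.1 hd, monomial_zero])
  rw [Finset.sum_image hinj] at h1
  rw [show (∑ ij ∈ G, monomial (e ij.1 ij.2) (coeff (e ij.1 ij.2) p)) =
      ∑ ij ∈ G, C (coeff (e ij.1 ij.2) p) * x ^ ij.1 * y ^ ij.2 from
    Finset.sum_congr rfl (fun ij _ => mono_eq _ _ _)] at h1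
  conv_lhs => rw [h1]
  rw [G, Finset.sum_insert (by decide), Finset.sum_insert (by decide),
    Finset.sum_insert (by decide), Finset.sum_insert (by decide),
    Finset.sum_insert (by decide), Finset.sum_insert (by decide),
    Finset.sum_insert (by decide), Finset.sum_insert (by decide),
    Finset.sum_insert (by decide), Finset.sum_insert (by decide),
    Finset.sum_insert (by decide), Finset.sum_singleton]
  ring

set_option maxHeartbeats 1600000 in
/-- Unisolvence of the lowest-order 2D Adini (plate) element: if `p ∈ S`
vanishes together with both first-order partial derivatives at the four
vertices `(±1, ±1)`, then `p = 0`. -/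
theorem adini_plate_unisolvent (p : M2) (hp : p ∈ S2)
    (hval : ∀ ε ∈ ({-1, 1} : Set ℝ), ∀ δ ∈ ({-1, 1} : Set ℝ),
      eval ![ε, δ] p = 0)
    (hdx : ∀ ε ∈ ({-1, 1} : Set ℝ), ∀ δ ∈ ({-1, 1} : Set ℝ),
      eval ![ε, δ] (pderiv 0 p) = 0)
    (hdy : ∀ ε ∈ ({-1, 1} : Set ℝ), ∀ δ ∈ ({-1, 1} : Set ℝ),
      eval ![ε, δ] (pderiv 1 p) = 0) :
    p = 0 := by
  rw [S2, Submodule.mem_sup] at hp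
  obtain ⟨q, hq, r, hr, hpr⟩ := hp
  rw [Submodule.mem_span_pair] at hr
  obtain ⟨a, b, rfl⟩ := hr
  rw [mem_restrictTotalDegree] at hq
  have hrep := rep p (support_sub q hq a b p hpr)
  set c00 := coeff (e 0 0) p
  set c10 := coeff (e 1 0) p
  set c01 := coeff (e 0 1) p
  set c20 := coeff (e 2 0) p
  set c11 := coeff (e 1 1) p
  set c02 := coeff (e 0 2) p
  set c30 := coeff (e 3 0) p
  set c21 := coeff (e 2 1) p
  set c12 := coeff (e 1 2) p
  set c03 := coeff (e 0 3) p
  set c31 := coeff (e 3 1) p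
  set c13 := coeff (e 1 3) p
  have V1 := hval (-1) (by simp) (-1) (by simp)
  have V2 := hval (-1) (by simp) 1 (by simp)
  have V3 := hval 1 (by simp) (-1) (by simp)
  have V4 := hval 1 (by simp) 1 (by simp)
  have X1 := hdx (-1) (by simp) (-1) (by simp)
  have X2 := hdx (-1) (by simp) 1 (by simp)
  have X3 := hdx 1 (by simp) (-1) (by simp)
  have X4 := hdx 1 (by simp) 1 (by simp)
  have Y1 := hdy (-1) (by simp) (-1) (by simp)
  have Y2 := hdy (-1) (by simp) 1 (by simp)
  have Y3 := hdy 1 (by simp) (-1) (by simp)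
  have Y4 := hdy 1 (by simp) 1 (by simp)
  rw [hrep] at V1 V2 V3 V4 X1 X2 X3 X4 Y1 Y2 Y3 Y4
  simp only [map_add, eval_mul, eval_pow, eval_C, x, y, eval_X, pderiv_mul, pderiv_C,
    pderiv_pow, pderiv_X, Matrix.cons_val_zero, Matrix.cons_val_one, Matrix.head_cons,
    Pi.single_eq_same, Pi.single_eq_of_ne (by decide : (1 : Fin 2) ≠ 0),
    Pi.single_eq_of_ne (by decide : (0 : Fin 2) ≠ 1), map_zero, map_one, map_mul,
    zero_mul, mul_zero, add_zero, zero_add, mul_one, one_mul, map_natCast]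
    at V1 V2 V3 V4 X1 X2 X3 X4 Y1 Y2 Y3 Y4
  norm_num at V1 V2 V3 V4 X1 X2 X3 X4 Y1 Y2 Y3 Y4
  have hc00 : c00 = 0 := by linarith
  have hc10 : c10 = 0 := by linarith
  have hc01 : c01 = 0 := by linarith
  have hc20 : c20 = 0 := by linarith
  have hc11 : c11 = 0 := by linarith
  have hc02 : c02 = 0 := by linarith
  have hc30 : c30 = 0 := by linarith
  have hc21 : c21 = 0 := by linarith
  have hc12 : c12 = 0 := by linarith
  have hc03 : c03 = 0 := by linarith
  have hc31 : c31 = 0 := by linarith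
  have hc13 : c13 = 0 := by linarith
  rw [hrep, hc00, hc10, hc01, hc20, hc11, hc02, hc30, hc21, hc12, hc03, hc31, hc13]
  simp

end
end

section
/- Unisolvence of the lowest-order 2D cubical Hermite 0-form element: Let Q₃ := span{x^i y^j : 0 ≤ i,j ≤ 3} ⊂ ℝ[x,y]. If p ∈ Q₃ satisfies p(ε,δ) = 0, (∂_x p)(ε,δ) = 0 and (∂_y p)(ε,δ) = 0 for all ε,δ ∈ {−1,1}, and ∫_{[−1,1]²} p q = 0 for every q ∈ span{1, x, y, xy}, then p = 0. -/
open MvPolynomial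

noncomputable section

/-- The tensor-product space `Q₃ := span{x^i y^j : i, j ≤ 3}`. -/
def Q3 : Submodule ℝ M2 :=
  Submodule.span ℝ {p : M2 | ∃ i j : ℕ, i ≤ 3 ∧ j ≤ 3 ∧ p = x ^ i * y ^ j}

/-- The bilinear space `Q₁ := span{1, x, y, xy}`. -/
def Q1 : Submodule ℝ M2 := Submodule.span ℝ {1, x, y, x * y}

/-!
Along each edge of the square, `p` restricts to a cubic whose value and derivative vanish at both
endpoints, so it vanishes identically; hence `p = (1 - x²)(1 - y²) q` with `q ∈ Q₁`. Testing the
moment condition against this `q` gives `∫∫ (1 - x²)(1 - y²) q² = 0`, and by parity this weighted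
integral is a diagonal form with positive entries in the four coefficients of `q`, so `q = 0`.
-/

def cubic (a : Fin 4 → ℝ) (u : ℝ) : ℝ := ∑ i, a i * u ^ (i : ℕ)

def cubicDeriv (a : Fin 4 → ℝ) (u : ℝ) : ℝ := ∑ i, a i * (i : ℕ) * u ^ ((i : ℕ) - 1)

lemma cubic_eq (a : Fin 4 → ℝ) (u : ℝ) : cubic a u = a 0 + a 1 * u + a 2 * u ^ 2 + a 3 * u ^ 3 := by
  simp [cubic, Fin.sum_univ_four]

lemma cubicDeriv_eq (a : Fin 4 → ℝ) (u : ℝ) :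
    cubicDeriv a u = a 1 + 2 * a 2 * u + 3 * a 3 * u ^ 2 := by
  simp [cubicDeriv, Fin.sum_univ_four, mul_comm]

lemma cubic_eq_zero_of_hermite_data {a : Fin 4 → ℝ}
    (hval : ∀ ε ∈ ({-1, 1} : Set ℝ), cubic a ε = 0)
    (hder : ∀ ε ∈ ({-1, 1} : Set ℝ), cubicDeriv a ε = 0) : a = 0 := by
  have h₁ := hval (-1) (by simp)
  have h₂ := hval 1 (by simp)
  have h₃ := hder (-1) (by simp)
  have h₄ := hder 1 (by simp)
  rw [cubic_eq] at h₁ h₂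
  rw [cubicDeriv_eq] at h₃ h₄
  ext i
  fin_cases i <;> simp only [Fin.zero_eta, Fin.mk_one, Fin.reduceFinMk, Fin.isValue, Pi.zero_apply] <;>
    linarith

lemma cubic_eq_one_sub_sq_mul {a : Fin 4 → ℝ}
    (hval : ∀ ε ∈ ({-1, 1} : Set ℝ), cubic a ε = 0) (u : ℝ) :
    cubic a u = (1 - u ^ 2) * (a 0 + a 1 * u) := by
  have h₁ := hval (-1) (by simp)
  have h₂ := hval 1 (by simp)
  rw [cubic_eq] at h₁ h₂ ⊢
  linear_combination (u ^ 2 + u ^ 3) / 2 * h₂ + (u ^ 2 - u ^ 3) / 2 * h₁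

def bicubic (c : Fin 4 → Fin 4 → ℝ) : M2 := ∑ i, ∑ j, c i j • (x ^ (i : ℕ) * y ^ (j : ℕ))

lemma exists_bicubic_eq_of_mem_Q3 {p : M2} (hp : p ∈ Q3) : ∃ c, bicubic c = p := by
  have hQ3 : Q3 = Submodule.span ℝ
      (Set.range fun ij : Fin 4 × Fin 4 => x ^ (ij.1 : ℕ) * y ^ (ij.2 : ℕ)) := by
    refine congrArg _ (Set.ext fun q => ⟨?_, ?_⟩)
    · rintro ⟨i, j, hi, hj, rfl⟩
      exact ⟨(⟨i, by omega⟩, ⟨j, by omega⟩), rfl⟩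
    · rintro ⟨⟨i, j⟩, rfl⟩
      exact ⟨i, j, by omega, by omega, rfl⟩
  rw [hQ3, Submodule.mem_span_range_iff_exists_fun] at hp
  obtain ⟨c, rfl⟩ := hp
  exact ⟨fun i j => c (i, j), by rw [bicubic, Fintype.sum_prod_type]⟩

lemma eval_bicubic_eq_cubic_in_x (c : Fin 4 → Fin 4 → ℝ) (s t : ℝ) :
    eval ![s, t] (bicubic c) = cubic (fun i => cubic (c i) t) s := by
  simp only [bicubic, cubic, x, y, map_sum, smul_eval, map_mul, map_pow, eval_X,
    Matrix.cons_val_zero, Matrix.cons_val_one, Finset.sum_mul]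
  exact Finset.sum_congr rfl fun i _ => Finset.sum_congr rfl fun j _ => by ring

lemma eval_bicubic_eq_cubic_in_y (c : Fin 4 → Fin 4 → ℝ) (s t : ℝ) :
    eval ![s, t] (bicubic c) = cubic (fun j => cubic (fun i => c i j) s) t := by
  rw [eval_bicubic_eq_cubic_in_x]
  simp only [cubic, Finset.sum_mul]
  rw [Finset.sum_comm]
  exact Finset.sum_congr rfl fun i _ => Finset.sum_congr rfl fun j _ => by ring

lemma eval_pderiv_zero_x_pow_mul_y_pow (i j : ℕ) (s t : ℝ) :
    eval ![s, t] (pderiv 0 (x ^ i * y ^ j)) = i * s ^ (i - 1) * t ^ j := by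
  simp [x, y, pderiv_X, mul_comm]

lemma eval_pderiv_one_x_pow_mul_y_pow (i j : ℕ) (s t : ℝ) :
    eval ![s, t] (pderiv 1 (x ^ i * y ^ j)) = s ^ i * (j * t ^ (j - 1)) := by
  simp [x, y, pderiv_X]

lemma eval_pderiv_zero_bicubic (c : Fin 4 → Fin 4 → ℝ) (s t : ℝ) :
    eval ![s, t] (pderiv 0 (bicubic c)) = cubicDeriv (fun i => cubic (c i) t) s := by
  simp only [bicubic, cubicDeriv, cubic, map_sum, Derivation.map_smul, smul_eval,
    eval_pderiv_zero_x_pow_mul_y_pow, Finset.sum_mul]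
  exact Finset.sum_congr rfl fun i _ => Finset.sum_congr rfl fun j _ => by ring

lemma eval_pderiv_one_bicubic (c : Fin 4 → Fin 4 → ℝ) (s t : ℝ) :
    eval ![s, t] (pderiv 1 (bicubic c)) = cubicDeriv (fun j => cubic (fun i => c i j) s) t := by
  simp only [bicubic, cubicDeriv, cubic, map_sum, Derivation.map_smul, smul_eval,
    eval_pderiv_one_x_pow_mul_y_pow, Finset.sum_mul]
  rw [Finset.sum_comm]
  exact Finset.sum_congr rfl fun i _ => Finset.sum_congr rfl fun j _ => by ring

/-- If `bicubic c = (1 - x²)(1 - y²) q` with `q ∈ Q₁`, then `q = bilinear c`, since the bubble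
`(1 - x²)(1 - y²)` is `1` modulo `x²` and `y²`. -/
def bilinear (c : Fin 4 → Fin 4 → ℝ) : M2 :=
  c 0 0 • 1 + c 1 0 • x + c 0 1 • y + c 1 1 • (x * y)

lemma bilinear_mem_Q1 (c : Fin 4 → Fin 4 → ℝ) : bilinear c ∈ Q1 := by
  unfold bilinear Q1
  refine Submodule.add_mem _ (Submodule.add_mem _ (Submodule.add_mem _ ?_ ?_) ?_) ?_ <;>
    exact Submodule.smul_mem _ _ (Submodule.subset_span (by simp))

lemma eval_bilinear (c : Fin 4 → Fin 4 → ℝ) (s t : ℝ) :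
    eval ![s, t] (bilinear c) = c 0 0 + c 1 0 * s + c 0 1 * t + c 1 1 * s * t := by
  simp [bilinear, x, y, mul_assoc]

lemma eval_bicubic_eq_of_vertex_data {c : Fin 4 → Fin 4 → ℝ}
    (hval : ∀ ε ∈ ({-1, 1} : Set ℝ), ∀ δ ∈ ({-1, 1} : Set ℝ), eval ![ε, δ] (bicubic c) = 0)
    (hdx : ∀ ε ∈ ({-1, 1} : Set ℝ), ∀ δ ∈ ({-1, 1} : Set ℝ),
      eval ![ε, δ] (pderiv 0 (bicubic c)) = 0)
    (hdy : ∀ ε ∈ ({-1, 1} : Set ℝ), ∀ δ ∈ ({-1, 1} : Set ℝ),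
      eval ![ε, δ] (pderiv 1 (bicubic c)) = 0) (s t : ℝ) :
    eval ![s, t] (bicubic c) = (1 - s ^ 2) * (1 - t ^ 2) * eval ![s, t] (bilinear c) := by
  have hrow : ∀ i, ∀ δ ∈ ({-1, 1} : Set ℝ), cubic (c i) δ = 0 := fun i δ hδ =>
    congrFun (cubic_eq_zero_of_hermite_data (a := fun i => cubic (c i) δ)
      (fun ε hε => (eval_bicubic_eq_cubic_in_x c ε δ).symm.trans (hval ε hε δ hδ))
      (fun ε hε => (eval_pderiv_zero_bicubic c ε δ).symm.trans (hdx ε hε δ hδ))) i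
  have hcol : ∀ j, ∀ ε ∈ ({-1, 1} : Set ℝ), cubic (fun i => c i j) ε = 0 := fun j ε hε =>
    congrFun (cubic_eq_zero_of_hermite_data (a := fun j => cubic (fun i => c i j) ε)
      (fun δ hδ => (eval_bicubic_eq_cubic_in_y c ε δ).symm.trans (hval ε hε δ hδ))
      (fun δ hδ => (eval_pderiv_one_bicubic c ε δ).symm.trans (hdy ε hε δ hδ))) j
  calc eval ![s, t] (bicubic c)
      = cubic (fun i => (1 - t ^ 2) * (c i 0 + c i 1 * t)) s := by
        simp only [eval_bicubic_eq_cubic_in_x, cubic_eq_one_sub_sq_mul (hrow _)]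
    _ = (1 - t ^ 2) * (cubic (fun i => c i 0) s + cubic (fun i => c i 1) s * t) := by
        simp only [cubic, Fin.sum_univ_four]
        ring
    _ = (1 - s ^ 2) * (1 - t ^ 2) * eval ![s, t] (bilinear c) := by
        rw [cubic_eq_one_sub_sq_mul (hcol 0), cubic_eq_one_sub_sq_mul (hcol 1), eval_bilinear]
        ring

lemma integral_one_sub_sq_mul_sq (A B : ℝ) :
    ∫ u in (-1 : ℝ)..1, (1 - u ^ 2) * (A + B * u) ^ 2 = 4 / 3 * A ^ 2 + 4 / 15 * B ^ 2 := by
  have hF : ∀ u ∈ Set.uIcc (-1 : ℝ) 1, HasDerivAt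
      (fun u => A ^ 2 * u + A * B * u ^ 2 + (B ^ 2 - A ^ 2) / 3 * u ^ 3 - A * B / 2 * u ^ 4
        - B ^ 2 / 5 * u ^ 5) ((1 - u ^ 2) * (A + B * u) ^ 2) u := by
    intro u _
    have h := (((((hasDerivAt_id' u).const_mul (A ^ 2)).add
      ((hasDerivAt_pow 2 u).const_mul (A * B))).add
      ((hasDerivAt_pow 3 u).const_mul ((B ^ 2 - A ^ 2) / 3))).sub
      ((hasDerivAt_pow 4 u).const_mul (A * B / 2))).sub
      ((hasDerivAt_pow 5 u).const_mul (B ^ 2 / 5))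
    exact h.congr_deriv (by push_cast; ring)
  rw [intervalIntegral.integral_eq_sub_of_hasDerivAt hF
    ((by fun_prop : Continuous _).intervalIntegrable _ _)]
  ring

lemma integral_bubble_mul_eval_bilinear_sq (c : Fin 4 → Fin 4 → ℝ) :
    ∫ s in (-1 : ℝ)..1, ∫ t in (-1 : ℝ)..1,
      (1 - s ^ 2) * (1 - t ^ 2) * eval ![s, t] (bilinear c) * eval ![s, t] (bilinear c) =
      16 / 9 * c 0 0 ^ 2 + 16 / 45 * c 1 0 ^ 2 + 16 / 45 * c 0 1 ^ 2 + 16 / 225 * c 1 1 ^ 2 := by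
  have hinner : ∀ s : ℝ, ∫ t in (-1 : ℝ)..1,
      (1 - s ^ 2) * (1 - t ^ 2) * eval ![s, t] (bilinear c) * eval ![s, t] (bilinear c) =
      4 / 3 * ((1 - s ^ 2) * (c 0 0 + c 1 0 * s) ^ 2) +
        4 / 15 * ((1 - s ^ 2) * (c 0 1 + c 1 1 * s) ^ 2) := by
    intro s
    calc _ = (1 - s ^ 2) * ∫ t in (-1 : ℝ)..1,
          (1 - t ^ 2) * (c 0 0 + c 1 0 * s + (c 0 1 + c 1 1 * s) * t) ^ 2 := by
          rw [← intervalIntegral.integral_const_mul]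
          congr 1 with t
          rw [eval_bilinear]
          ring
      _ = _ := by
          rw [integral_one_sub_sq_mul_sq]
          ring
  simp only [hinner]
  rw [intervalIntegral.integral_add
    ((by fun_prop : Continuous _).intervalIntegrable _ _)
    ((by fun_prop : Continuous _).intervalIntegrable _ _), intervalIntegral.integral_const_mul,
    intervalIntegral.integral_const_mul, integral_one_sub_sq_mul_sq, integral_one_sub_sq_mul_sq]
  ring

lemma bilinear_eq_zero_of_integral_bubble_mul_sq_eq_zero {c : Fin 4 → Fin 4 → ℝ}
    (h : ∫ s in (-1 : ℝ)..1, ∫ t in (-1 : ℝ)..1,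
      (1 - s ^ 2) * (1 - t ^ 2) * eval ![s, t] (bilinear c) * eval ![s, t] (bilinear c) = 0) :
    bilinear c = 0 := by
  rw [integral_bubble_mul_eval_bilinear_sq] at h
  obtain ⟨h00, h10, h01, h11⟩ : c 0 0 = 0 ∧ c 1 0 = 0 ∧ c 0 1 = 0 ∧ c 1 1 = 0 := by
    refine ⟨?_, ?_, ?_, ?_⟩ <;>
      nlinarith [sq_nonneg (c 0 0), sq_nonneg (c 1 0), sq_nonneg (c 0 1), sq_nonneg (c 1 1)]
  simp [bilinear, h00, h10, h01, h11]

/-- Unisolvence of the lowest-order 2D cubical Hermite 0-form element: if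
`p ∈ Q₃` vanishes together with both first-order partial derivatives at the
four vertices `(±1, ±1)` and has vanishing interior moments against
`span{1, x, y, xy}`, then `p = 0`. -/
theorem hermite_2d_0form_unisolvent (p : M2) (hp : p ∈ Q3)
    (hval : ∀ ε ∈ ({-1, 1} : Set ℝ), ∀ δ ∈ ({-1, 1} : Set ℝ),
      eval ![ε, δ] p = 0)
    (hdx : ∀ ε ∈ ({-1, 1} : Set ℝ), ∀ δ ∈ ({-1, 1} : Set ℝ),
      eval ![ε, δ] (pderiv 0 p) = 0)
    (hdy : ∀ ε ∈ ({-1, 1} : Set ℝ), ∀ δ ∈ ({-1, 1} : Set ℝ),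
      eval ![ε, δ] (pderiv 1 p) = 0)
    (hmom : ∀ q ∈ Q1,
      (∫ s in (-1 : ℝ)..1, ∫ t in (-1 : ℝ)..1,
        eval ![s, t] p * eval ![s, t] q) = 0) :
    p = 0 := by
  obtain ⟨c, rfl⟩ := exists_bicubic_eq_of_mem_Q3 hp
  have hfactor := eval_bicubic_eq_of_vertex_data hval hdx hdy
  have hq : bilinear c = 0 := by
    apply bilinear_eq_zero_of_integral_bubble_mul_sq_eq_zero
    simpa only [hfactor] using hmom (bilinear c) (bilinear_mem_Q1 c)
  refine MvPolynomial.funext fun v => ?_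
  have hv : v = ![v 0, v 1] := by
    ext i
    fin_cases i <;> rfl
  rw [hv, hfactor, hq]
  simp

end
end

section
/- Unisolvence of the lowest-order 2D Adini 1-form (vertex-continuous BDM) element: Let curl f := (−∂_y f, ∂_x f) and S := {(p,q) ∈ ℝ[x,y]² : deg p ≤ 2 and deg q ≤ 2} + span{curl(x³y), curl(xy³)}, a 14-dimensional space. Suppose u = (u₁,u₂) ∈ S satisfies: u(ε,δ) = (0,0) for all ε,δ ∈ {−1,1}; ∫_{−1}^{1} u₁(ε,t) dt = 0 for ε ∈ {−1,1}; ∫_{−1}^{1} u₂(t,δ) dt = 0 for δ ∈ {−1,1}; and ∫_{[−1,1]²} u₁ = ∫_{[−1,1]²} u₂ = 0. Then u = 0. -/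
/-!
Evaluated at `(s, t)`, a field `u = v + a • curl (x³y) + b • curl (xy³)` of `S` has components
`q₀ - a s³ - 3b s t²` and `q₁ + 3a s² t + b t³` with `q₀, q₁` quadratic; exchanging `s` and `t`
turns the second component into the shape of the first with `(a, b) ↦ (-b, -a)`. For a function
`q - α s³ - 3β s t²`, the four vertex values, the two moments on the edges `s = ±1` and the
interior moment force `β = 0` and leave exactly the multiples of `s - s³`. Applied to both
components this gives `b = 0` and `a = 0`, hence `u = 0`.
-/

open MvPolynomial

noncomputable section

/-- The lowest-order 2D Adini 1-form shape space
`S := [P₂]² + span{curl(x³y), curl(xy³)}` (the degree-2 cubical BDM space). -/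
def S1 : Submodule ℝ (Fin 2 → M2) :=
  (Submodule.pi Set.univ fun _ => restrictTotalDegree (Fin 2) ℝ 2) ⊔
    Submodule.span ℝ {curl2 (x ^ 3 * y), curl2 (x * y ^ 3)}

open Set intervalIntegral

lemma curl2_x_pow_three_mul_y : curl2 (x ^ 3 * y) = ![-x ^ 3, 3 * x ^ 2 * y] := by
  ext1 i
  fin_cases i <;> simp [curl2, x, y, mul_comm, mul_left_comm]

lemma curl2_x_mul_y_pow_three : curl2 (x * y ^ 3) = ![-(3 * x * y ^ 2), y ^ 3] := by
  ext1 i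
  fin_cases i <;> simp [curl2, x, y, mul_comm, mul_left_comm]

def IsQuadratic (g : ℝ → ℝ → ℝ) : Prop :=
  ∃ c₀ c₁ c₂ c₃ c₄ c₅ : ℝ, ∀ s t,
    g s t = c₀ + c₁ * s + c₂ * t + c₃ * s ^ 2 + c₄ * (s * t) + c₅ * t ^ 2

namespace IsQuadratic

lemma zero : IsQuadratic fun _ _ => 0 :=
  ⟨0, 0, 0, 0, 0, 0, fun _ _ => by ring⟩

lemma add {f g : ℝ → ℝ → ℝ} (hf : IsQuadratic f) (hg : IsQuadratic g) :
    IsQuadratic fun s t => f s t + g s t := by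
  obtain ⟨c₀, c₁, c₂, c₃, c₄, c₅, hf⟩ := hf
  obtain ⟨d₀, d₁, d₂, d₃, d₄, d₅, hg⟩ := hg
  exact ⟨c₀ + d₀, c₁ + d₁, c₂ + d₂, c₃ + d₃, c₄ + d₄, c₅ + d₅, fun s t => by
    simp only [hf, hg]; ring⟩

lemma swap {g : ℝ → ℝ → ℝ} (hg : IsQuadratic g) : IsQuadratic fun s t => g t s := by
  obtain ⟨c₀, c₁, c₂, c₃, c₄, c₅, hg⟩ := hg
  exact ⟨c₀, c₂, c₁, c₅, c₄, c₃, fun s t => by simp only [hg]; ring⟩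

lemma monomial (a : ℝ) {i j : ℕ} (hij : i + j ≤ 2) : IsQuadratic fun s t => a * s ^ i * t ^ j := by
  obtain ⟨hi, hj⟩ : i ≤ 2 ∧ j ≤ 2 := by omega
  interval_cases i <;> interval_cases j <;> try omega
  · exact ⟨a, 0, 0, 0, 0, 0, fun s t => by ring⟩
  · exact ⟨0, 0, a, 0, 0, 0, fun s t => by ring⟩
  · exact ⟨0, 0, 0, 0, 0, a, fun s t => by ring⟩
  · exact ⟨0, a, 0, 0, 0, 0, fun s t => by ring⟩
  · exact ⟨0, 0, 0, 0, a, 0, fun s t => by ring⟩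
  · exact ⟨0, 0, 0, a, 0, 0, fun s t => by ring⟩

end IsQuadratic

lemma isQuadratic_eval {p : M2} (hp : p.totalDegree ≤ 2) :
    IsQuadratic fun s t => eval ![s, t] p := by
  rw [p.as_sum]
  refine Finset.sum_induction _ (fun q : M2 => IsQuadratic fun s t => eval ![s, t] q)
    (fun q r hq hr => by simpa only [eval_add] using hq.add hr) (by simpa using IsQuadratic.zero)
    fun m hm => ?_
  have hdeg : m 0 + m 1 ≤ 2 := by
    simpa [Finsupp.sum_fintype, Fin.sum_univ_two] using (le_totalDegree hm).trans hp
  simpa [eval_monomial, Finsupp.prod_fintype, Fin.prod_univ_two, mul_assoc] using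
    IsQuadratic.monomial (coeff m p) hdeg

lemma exists_eval_eq_of_mem_S1 {u : Fin 2 → M2} (hu : u ∈ S1) :
    ∃ g₀ g₁ : ℝ → ℝ → ℝ, IsQuadratic g₀ ∧ IsQuadratic g₁ ∧ ∃ a b : ℝ, ∀ s t,
      eval ![s, t] (u 0) = g₀ s t - a * s ^ 3 - 3 * b * s * t ^ 2 ∧
      eval ![s, t] (u 1) = g₁ s t + 3 * a * s ^ 2 * t + b * t ^ 3 := by
  obtain ⟨v, hv, w, hw, rfl⟩ := Submodule.mem_sup.mp hu
  obtain ⟨a, b, rfl⟩ := Submodule.mem_span_pair.mp hw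
  have hq (i : Fin 2) : IsQuadratic fun s t => eval ![s, t] (v i) :=
    isQuadratic_eval ((mem_restrictTotalDegree _ _ _).mp (Submodule.mem_pi.mp hv i trivial))
  refine ⟨_, _, hq 0, hq 1, a, b, fun s t => ⟨?_, ?_⟩⟩ <;>
    simp only [Pi.add_apply, Pi.smul_apply, curl2_x_pow_three_mul_y, curl2_x_mul_y_pow_three] <;>
    simp [x, y] <;> ring

lemma integral_neg_one_one_of_cubic {f : ℝ → ℝ} {A B C D : ℝ}
    (hf : ∀ t, f t = A + B * t + C * t ^ 2 + D * t ^ 3) :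
    ∫ t in (-1 : ℝ)..1, f t = 2 * A + 2 / 3 * C := by
  simp (disch := exact (by fun_prop : Continuous _).intervalIntegrable _ _) only [hf,
    integral_add, integral_const_mul, integral_pow, integral_const]
  rw [integral_const_mul, integral_id]
  norm_num
  ring

lemma intervalIntegral_swap_of_continuous {F : ℝ → ℝ → ℝ} (hF : Continuous (Function.uncurry F))
    (a b c d : ℝ) :
    ∫ s in a..b, ∫ t in c..d, F s t = ∫ t in c..d, ∫ s in a..b, F s t :=
  MeasureTheory.intervalIntegral_intervalIntegral_swap <|
    (hF.continuousOn.integrableOn_compact (isCompact_uIcc.prod isCompact_uIcc)).mono_set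
      (prod_mono uIoc_subset_uIcc uIoc_subset_uIcc)

theorem eq_mul_sub_cube_of_dofs_eq_zero {f g : ℝ → ℝ → ℝ} {α β : ℝ} (hg : IsQuadratic g)
    (hf : ∀ s t, f s t = g s t - α * s ^ 3 - 3 * β * s * t ^ 2)
    (hvert : ∀ ε ∈ ({-1, 1} : Set ℝ), ∀ δ ∈ ({-1, 1} : Set ℝ), f ε δ = 0)
    (hedge : ∀ ε ∈ ({-1, 1} : Set ℝ), ∫ t in (-1 : ℝ)..1, f ε t = 0)
    (hint : ∫ s in (-1 : ℝ)..1, ∫ t in (-1 : ℝ)..1, f s t = 0) :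
    β = 0 ∧ ∀ s t, f s t = α * (s - s ^ 3) := by
  obtain ⟨c₀, c₁, c₂, c₃, c₄, c₅, hg⟩ := hg
  have hf' (s t : ℝ) : f s t = (c₀ + c₁ * s + c₃ * s ^ 2 - α * s ^ 3) + (c₂ + c₄ * s) * t
      + (c₅ - 3 * β * s) * t ^ 2 + 0 * t ^ 3 := by
    rw [hf, hg]; ring
  have hline (s : ℝ) : ∫ t in (-1 : ℝ)..1, f s t
      = (2 * c₀ + 2 / 3 * c₅) + (2 * c₁ - 2 * β) * s + 2 * c₃ * s ^ 2 + (-2 * α) * s ^ 3 := by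
    rw [integral_neg_one_one_of_cubic (hf' s)]; ring
  rw [integral_congr fun s _ => hline s, integral_neg_one_one_of_cubic fun _ => rfl] at hint
  simp only [mem_insert_iff, mem_singleton_iff, forall_eq_or_imp, forall_eq, hf'] at hvert
  simp only [mem_insert_iff, mem_singleton_iff, forall_eq_or_imp, forall_eq, hline] at hedge
  obtain ⟨⟨v₁, v₂⟩, v₃, v₄⟩ := hvert
  obtain ⟨e₁, e₂⟩ := hedge
  norm_num at v₁ v₂ v₃ v₄ e₁ e₂
  obtain rfl : β = 0 := by linarith
  obtain rfl : c₁ = α := by linarith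
  obtain rfl : c₀ = 0 := by linarith
  obtain rfl : c₂ = 0 := by linarith
  obtain rfl : c₃ = 0 := by linarith
  obtain rfl : c₄ = 0 := by linarith
  obtain rfl : c₅ = 0 := by linarith
  exact ⟨rfl, fun s t => by rw [hf']; ring⟩

lemma eq_zero_of_eval_eq_zero {p : M2} (h : ∀ s t, eval ![s, t] p = 0) : p = 0 :=
  MvPolynomial.funext fun v => by rw [← FinVec.etaExpand_eq v]; exact h (v 0) (v 1)

/-- Unisolvence of the lowest-order 2D Adini 1-form (vertex-continuous BDM)
element: a field in `S` with vanishing vertex values, vanishing zeroth normal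
moments on all four edges, and vanishing interior integrals of both
components is zero. -/
theorem adini_1form_unisolvent (u : Fin 2 → M2) (hu : u ∈ S1)
    (hvert : ∀ ε ∈ ({-1, 1} : Set ℝ), ∀ δ ∈ ({-1, 1} : Set ℝ), ∀ i : Fin 2,
      eval ![ε, δ] (u i) = 0)
    (hedgex : ∀ ε ∈ ({-1, 1} : Set ℝ),
      (∫ t in (-1 : ℝ)..1, eval ![ε, t] (u 0)) = 0)
    (hedgey : ∀ δ ∈ ({-1, 1} : Set ℝ),
      (∫ t in (-1 : ℝ)..1, eval ![t, δ] (u 1)) = 0)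
    (hint0 : (∫ s in (-1 : ℝ)..1, ∫ t in (-1 : ℝ)..1, eval ![s, t] (u 0)) = 0)
    (hint1 : (∫ s in (-1 : ℝ)..1, ∫ t in (-1 : ℝ)..1, eval ![s, t] (u 1)) = 0) :
    u = 0 := by
  obtain ⟨g₀, g₁, hg₀, hg₁, a, b, hu⟩ := exists_eval_eq_of_mem_S1 hu
  obtain ⟨hb, hu₀⟩ := eq_mul_sub_cube_of_dofs_eq_zero hg₀ (fun s t => (hu s t).1)
    (fun ε hε δ hδ => hvert ε hε δ hδ 0) hedgex hint0
  have hint1' : ∫ s in (-1 : ℝ)..1, ∫ t in (-1 : ℝ)..1, eval ![t, s] (u 1) = 0 := by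
    have hcont : Continuous (Function.uncurry fun s t => eval ![t, s] (u 1)) :=
      (continuous_eval _).comp (by fun_prop)
    rw [intervalIntegral_swap_of_continuous hcont]
    exact hint1
  obtain ⟨ha, hu₁⟩ := eq_mul_sub_cube_of_dofs_eq_zero hg₁.swap (f := fun s t => eval ![t, s] (u 1))
    (α := -b) (β := -a) (fun s t => by rw [(hu t s).2]; ring)
    (fun ε hε δ hδ => hvert δ hδ ε hε 1) hedgey hint1'
  funext i
  fin_cases i
  · exact eq_zero_of_eval_eq_zero fun s t => by simp [hu₀, neg_eq_zero.mp ha]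
  · exact eq_zero_of_eval_eq_zero fun s t => by simp [hu₁ t s, hb]

end
end
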